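/- arXiv:2012.12710 — 8 statements merged into one kernel-verified Lean document; each statement's English description precedes it below -/
import Mathlib

section
/- For a matroid M = (E, I) and an independent set A ∈ I, if B ⊆ E satisfies |B| = |A| and the exchange digraph D_M(A) (with edges (g, g') for g ∈ A, g' ∉ A such that A − g + g' ∈ I) contains a unique perfect matching on the vertex set A Δ B, then B is independent in M. -/
structure FinMatroid (E : Type*) [Fintype E] [DecidableEq E] where
  Indep : Finset E → Prop
  empty_indep : Indep ∅
  subset_indep : ∀ ⦃I J : Finset E⦄, Indep I → J ⊆ I → Indep J
  aug : ∀ ⦃I J : Finset E⦄, Indep I → Indep J → I.card < J.card →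
    ∃ g ∈ J \ I, Indep (insert g I)

noncomputable def FinMatroid.rank {E : Type*} [Fintype E] [DecidableEq E]
    (M : FinMatroid E) (S : Finset E) : ℕ :=
  sSup {t | ∃ I : Finset E, I ⊆ S ∧ M.Indep I ∧ I.card = t}

/-- Maximin share `μ(k, S)` for a ℕ-valued valuation `v`: the maximum over
`k`-partitions `(Y 0, …, Y (k-1))` of `S` of `min_j v (Y j)`. -/
noncomputable def mmsN {E : Type*} [Fintype E] [DecidableEq E]
    (v : Finset E → ℕ) (k : ℕ) (S : Finset E) : ℕ :=
  sSup {t | ∃ Y : Fin k → Finset E,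
    (∀ a b, a ≠ b → Disjoint (Y a) (Y b)) ∧ Finset.univ.biUnion Y = S ∧
    ∀ j, t ≤ v (Y j)}

/-!
Suppose `B` is dependent and take a minimal dependent `C ⊆ B`; let `S` be the set of
`x ∈ A \ B` with `f x ∈ C`. If some `y ∈ S` admits no exchange `A - y + f x` with
`x ∈ S \ {y}`, then `C - f y` lies in the closure of `A - y` while `f y` does not, which
forces `C` to be independent. Otherwise these exchanges give every vertex of `S` a successor
in `S`, hence a cycle, and shifting the matching along the cycle yields a second perfect
matching.
-/

open Finset

section Matching

variable {α β : Type*} [DecidableEq α]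

theorem Finset.exists_bijOn_of_mapsTo {s : Finset α} (hs : s.Nonempty) {g : α → α}
    (hg : ∀ x ∈ s, g x ∈ s) : ∃ p ⊆ s, p.Nonempty ∧ Set.BijOn g p p := by
  -- a nonempty `g`-invariant subset of minimal size is mapped onto itself
  obtain ⟨p, hp, hmin⟩ := exists_min_image
    (s.powerset.filter fun q => q.Nonempty ∧ ∀ x ∈ q, g x ∈ q) card
    ⟨s, mem_filter.mpr ⟨mem_powerset_self s, hs, hg⟩⟩
  obtain ⟨hps, hpne, hpg⟩ := mem_filter.mp hp
  have himage : p.image g ⊆ p := image_subset_iff.mpr hpg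
  have heq : p.image g = p := eq_of_subset_of_card_le himage <| hmin _ <|
    mem_filter.mpr ⟨mem_powerset.mpr (himage.trans (mem_powerset.mp hps)), hpne.image g,
      fun x hx => mem_image_of_mem g (himage hx)⟩
  refine ⟨p, mem_powerset.mp hps, hpne, hpg, card_image_iff.mp (by rw [heq]), fun y hy => ?_⟩
  rwa [← heq, coe_image] at hy

theorem Finset.bijOn_piecewise_id {p : Finset α} {t : Set α} {g : α → α}
    (hg : Set.BijOn g p p) (hpt : ↑p ⊆ t) : Set.BijOn (p.piecewise g id) t t := by
  refine ⟨fun x hx => ?_, fun x _ y _ hxy => ?_, fun y hy => ?_⟩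
  · by_cases hxp : x ∈ p
    · rw [piecewise_eq_of_mem _ _ _ hxp]
      exact hpt (hg.mapsTo hxp)
    · rwa [piecewise_eq_of_notMem _ _ _ hxp]
  · by_cases hxp : x ∈ p <;> by_cases hyp : y ∈ p <;>
      simp only [piecewise_eq_of_mem, piecewise_eq_of_notMem, hxp, hyp, id,
        not_false_eq_true] at hxy
    · exact hg.injOn hxp hyp hxy
    · exact absurd (hxy ▸ hg.mapsTo hxp) hyp
    · exact absurd (hxy ▸ hg.mapsTo hyp) hxp
    · exact hxy
  · by_cases hyp : y ∈ p
    · obtain ⟨x, hxp, rfl⟩ := hg.surjOn hyp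
      exact ⟨x, hpt hxp, piecewise_eq_of_mem _ _ _ hxp⟩
    · exact ⟨y, hy, piecewise_eq_of_notMem _ _ _ hyp⟩

theorem Set.BijOn.exists_ne_matching {f : α → β} {s : Set α} {t : Set β}
    (hf : Set.BijOn f s t) (R : α → β → Prop) (hR : ∀ x ∈ s, R x (f x))
    {S : Finset α} (hSs : ↑S ⊆ s) (hS : S.Nonempty)
    (hexch : ∀ y ∈ S, ∃ x ∈ S, x ≠ y ∧ R y (f x)) :
    ∃ f' : α → β, Set.BijOn f' s t ∧ (∀ x ∈ s, R x (f' x)) ∧ ∃ x ∈ s, f' x ≠ f x := by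
  -- `next` has a cycle in `S`; rotating `f` along it gives the second matching
  choose! next hnext_mem hnext_ne hnext_R using hexch
  obtain ⟨p, hpS, hp, hnext⟩ := S.exists_bijOn_of_mapsTo hS hnext_mem
  have hps : (↑p : Set α) ⊆ s := (Finset.coe_subset.mpr hpS).trans hSs
  refine ⟨f ∘ p.piecewise next id, hf.comp (bijOn_piecewise_id hnext hps), fun x hx => ?_, ?_⟩
  · by_cases hxp : x ∈ p
    · simpa only [Function.comp_apply, Finset.piecewise_eq_of_mem _ _ _ hxp] using
        hnext_R x (hpS hxp)
    · simpa only [Function.comp_apply, Finset.piecewise_eq_of_notMem _ _ _ hxp, id] using hR x hx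
  · obtain ⟨x, hxp⟩ := hp
    refine ⟨x, hps hxp, fun hfx => hnext_ne x (hpS hxp) ?_⟩
    rw [Function.comp_apply, Finset.piecewise_eq_of_mem _ _ _ hxp] at hfx
    exact hf.injOn (hps (hnext.mapsTo hxp)) (hps hxp) hfx

end Matching

namespace FinMatroid

variable {E : Type*} [Fintype E] [DecidableEq E] (M : FinMatroid E)

/-- For independent `I`, this says that `x` lies in the closure of `I`. -/
def Spans (I : Finset E) (x : E) : Prop :=
  x ∈ I ∨ ¬ M.Indep (insert x I)

variable {M}

theorem card_le_of_subset_union_of_spans {I X J : Finset E} (hI : M.Indep I)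
    (hX : ∀ x ∈ X, M.Spans I x) (hJ : M.Indep J) (hJX : J ⊆ X ∪ I) : #J ≤ #I := by
  by_contra! hlt
  obtain ⟨x, hx, hxI⟩ := M.aug hI hJ hlt
  obtain ⟨hxJ, hxI'⟩ := mem_sdiff.mp hx
  have hxX : x ∈ X := (mem_union.mp (hJX hxJ)).resolve_right hxI'
  exact (hX x hxX).elim hxI' (· hxI)

theorem indep_insert_of_spans {I J : Finset E} {z : E} (hz : ¬ M.Spans I z) (hJ : M.Indep J)
    (hJI : ∀ x ∈ J, M.Spans I x) : M.Indep (insert z J) := by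
  classical
  obtain ⟨hzI, hIz⟩ := not_or.mp hz
  rw [not_not] at hIz
  have hI : M.Indep I := M.subset_indep hIz (subset_insert z I)
  obtain ⟨W, hW, hWmax⟩ := exists_max_image
    ((J ∪ I).powerset.filter fun W => J ⊆ W ∧ M.Indep W) card
    ⟨J, mem_filter.mpr ⟨mem_powerset.mpr subset_union_left, subset_rfl, hJ⟩⟩
  obtain ⟨hWJI, hJW, hWind⟩ := mem_filter.mp hW
  have hWcard : #W ≤ #I := card_le_of_subset_union_of_spans hI hJI hWind (mem_powerset.mp hWJI)
  obtain ⟨x, hx, hWx⟩ := M.aug hWind hIz (by rw [card_insert_of_notMem hzI]; omega)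
  obtain ⟨hxIz, hxW⟩ := mem_sdiff.mp hx
  rcases mem_insert.mp hxIz with rfl | hxI
  · exact M.subset_indep hWx (insert_subset_insert x hJW)
  · -- otherwise `insert x W` would be a larger independent set between `J` and `J ∪ I`
    have := hWmax (insert x W) <| mem_filter.mpr
      ⟨mem_powerset.mpr (insert_subset (mem_union_right J hxI) (mem_powerset.mp hWJI)),
        hJW.trans (subset_insert x W), hWx⟩
    rw [card_insert_of_notMem hxW] at this
    omega

theorem exists_minimal_dependent_subset {B : Finset E} (hB : ¬ M.Indep B) :
    ∃ C ⊆ B, ¬ M.Indep C ∧ ∀ x ∈ C, M.Indep (C.erase x) := by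
  classical
  obtain ⟨C, hC, hmin⟩ := exists_min_image (B.powerset.filter fun C => ¬ M.Indep C) card
    ⟨B, mem_filter.mpr ⟨mem_powerset_self B, hB⟩⟩
  obtain ⟨hCB, hCdep⟩ := mem_filter.mp hC
  refine ⟨C, mem_powerset.mp hCB, hCdep, fun x hx => ?_⟩
  by_contra hdep
  have := hmin _ (mem_filter.mpr
    ⟨mem_powerset.mpr ((erase_subset x C).trans (mem_powerset.mp hCB)), hdep⟩)
  exact (card_erase_lt_of_mem hx).not_ge this

end FinMatroid

namespace FinMatroid

variable {E : Type*} [Fintype E] [DecidableEq E] {M : FinMatroid E}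

theorem indep_of_forall_not_indep_exchange {A B C : Finset E} {f : E → E}
    (hbij : Set.BijOn f ((A \ B : Finset E) : Set E) ((B \ A : Finset E) : Set E))
    (hedge : ∀ g ∈ A \ B, M.Indep (insert (f g) (A.erase g)))
    (hCB : C ⊆ B) {y : E} (hy : y ∈ A \ B) (hfyC : f y ∈ C) (hC : M.Indep (C.erase (f y)))
    (hsink : ∀ x ∈ A \ B, f x ∈ C → x ≠ y → ¬ M.Indep (insert (f x) (A.erase y))) :
    M.Indep C := by
  have hfy : f y ∈ B \ A := hbij.mapsTo hy
  rw [← insert_erase hfyC]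
  refine indep_insert_of_spans (I := A.erase y) ?_ hC ?_
  · rintro (hfyA | hdep)
    · exact (mem_sdiff.mp hfy).2 (mem_of_mem_erase hfyA)
    · exact hdep (hedge y hy)
  · intro x hx
    obtain ⟨hxy, hxC⟩ := mem_erase.mp hx
    by_cases hxA : x ∈ A
    · exact .inl (mem_erase.mpr ⟨fun h => (mem_sdiff.mp hy).2 (h ▸ hCB hxC), hxA⟩)
    · obtain ⟨g, hg, rfl⟩ := hbij.surjOn (mem_sdiff.mpr ⟨hCB hxC, hxA⟩)
      exact .inr (hsink g hg hxC fun h => hxy (h ▸ rfl))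

end FinMatroid

theorem stmt1_general {E : Type*} [Fintype E] [DecidableEq E] (M : FinMatroid E)
    (A B : Finset E) (hA : M.Indep A)
    (f : E → E)
    (hbij : Set.BijOn f ((A \ B : Finset E) : Set E) ((B \ A : Finset E) : Set E))
    (hedge : ∀ g ∈ A \ B, M.Indep (insert (f g) (A.erase g)))
    (huniq : ∀ f' : E → E,
      Set.BijOn f' ((A \ B : Finset E) : Set E) ((B \ A : Finset E) : Set E) →
      (∀ g ∈ A \ B, M.Indep (insert (f' g) (A.erase g))) →
      ∀ g ∈ A \ B, f' g = f g) :
    M.Indep B := by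
  by_contra hB
  obtain ⟨C, hCB, hC, hCmin⟩ := M.exists_minimal_dependent_subset hB
  set S := (A \ B).filter (f · ∈ C)
  by_cases hsink : ∃ y ∈ S, ∀ x ∈ S, x ≠ y → ¬ M.Indep (insert (f x) (A.erase y))
  · obtain ⟨y, hyS, hsink⟩ := hsink
    obtain ⟨hy, hfyC⟩ := mem_filter.mp hyS
    exact hC <| FinMatroid.indep_of_forall_not_indep_exchange hbij hedge hCB hy hfyC
      (hCmin _ hfyC) fun x hx hfx => hsink x (mem_filter.mpr ⟨hx, hfx⟩)
  · push Not at hsink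
    have hS : S.Nonempty := by
      obtain ⟨z, hzC, hzA⟩ := not_subset.mp fun hCA => hC (M.subset_indep hA hCA)
      obtain ⟨x, hx, rfl⟩ := hbij.surjOn (mem_sdiff.mpr ⟨hCB hzC, hzA⟩)
      exact ⟨x, mem_filter.mpr ⟨hx, hzC⟩⟩
    obtain ⟨f', hf', hedge', x, hx, hne⟩ :=
      hbij.exists_ne_matching (fun x e => M.Indep (insert e (A.erase x))) hedge
        (coe_subset.mpr (filter_subset _ _)) hS hsink
    exact hne (huniq f' hf' hedge' x hx)

/-- If `B` has the same size as an independent set `A` and the exchange digraph of `A`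
has a unique perfect matching on the symmetric difference (from `A` minus `B` to `B`
minus `A`), then `B` is independent. -/
theorem stmt1 {E : Type*} [Fintype E] [DecidableEq E] (M : FinMatroid E)
    (A B : Finset E) (hA : M.Indep A) (hcard : B.card = A.card)
    (f : E → E)
    (hbij : Set.BijOn f ((A \ B : Finset E) : Set E) ((B \ A : Finset E) : Set E))
    (hedge : ∀ g ∈ A \ B, M.Indep (insert (f g) (A.erase g)))
    (huniq : ∀ f' : E → E,
      Set.BijOn f' ((A \ B : Finset E) : Set E) ((B \ A : Finset E) : Set E) →
      (∀ g ∈ A \ B, M.Indep (insert (f' g) (A.erase g))) →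
      ∀ g ∈ A \ B, f' g = f g) :
    M.Indep B :=
  stmt1_general M A B hA f hbij hedge huniq
end

section
/- Let M = (E, I) be a matroid with rank function r, A ∈ I an independent set, and B ⊆ E with |B| = |A|, r(A ∪ B) = |A|, such that the exchange digraph D_M(A) contains a unique perfect matching on A Δ B. Then for any s ∉ A ∪ B with A ∪ {s} ∈ I, we also have B ∪ {s} ∈ I. -/
open Set Function

theorem Set.Finite.exists_mem_periodicPts {α : Type*} {S : Set α} (hS : S.Finite) {φ : α → α}
    (hmaps : MapsTo φ S S) (hne : S.Nonempty) : ∃ c ∈ S, c ∈ periodicPts φ := by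
  obtain ⟨a, ha⟩ := hne
  obtain ⟨m, n, hmn, hmn_eq⟩ :=
    hS.exists_lt_map_eq_of_forall_mem (f := fun n : ℕ => φ^[n] a) (fun n => hmaps.iterate n ha)
  refine ⟨φ^[m] a, hmaps.iterate m ha, mk_mem_periodicPts (n := n - m) (by omega) ?_⟩
  change φ^[n - m] (φ^[m] a) = φ^[m] a
  rw [← iterate_add_apply, Nat.sub_add_cancel hmn.le]
  exact hmn_eq.symm

theorem Function.bijective_piecewise_periodicPts {α : Type*} (φ : α → α)
    [DecidablePred (· ∈ periodicPts φ)] : Bijective ((periodicPts φ).piecewise φ id) := by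
  have hb := bijOn_periodicPts φ
  refine ⟨(injective_piecewise_iff _).2 ⟨hb.injOn, injOn_id _, fun x hx y hy => ?_⟩, fun y => ?_⟩
  · exact fun hxy => hy (by simpa [hxy] using hb.mapsTo hx)
  · by_cases hy : y ∈ periodicPts φ
    · obtain ⟨x, hx, rfl⟩ := hb.surjOn hy
      exact ⟨x, piecewise_eq_of_mem _ _ _ hx⟩
    · exact ⟨y, piecewise_eq_of_notMem _ _ _ hy⟩

theorem Set.MapsTo.bijOn_piecewise_periodicPts {α : Type*} {φ : α → α}
    [DecidablePred (· ∈ periodicPts φ)] {X : Set α} (hX : MapsTo φ X X) (hXc : MapsTo φ Xᶜ Xᶜ) :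
    BijOn ((periodicPts φ).piecewise φ id) X X := by
  have hσbij := bijective_piecewise_periodicPts φ
  set σ := (periodicPts φ).piecewise φ id with σ_def
  have hσ_eq : ∀ a, σ a = φ a ∨ σ a = a := fun a => by
    by_cases ha : a ∈ periodicPts φ <;> simp [σ_def, ha]
  refine ⟨fun a ha => ?_, hσbij.injective.injOn, ?_⟩
  · rcases hσ_eq a with e | e <;> rw [e]
    exacts [hX ha, ha]
  · refine compl_compl X ▸ MapsTo.surjOn_compl (fun a ha => ?_) hσbij.surjective
    rcases hσ_eq a with e | e <;> rw [e]
    exacts [hXc ha, ha]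

theorem Set.BijOn.exists_sink_of_unique {α β : Type*} {X : Set α} {Y : Set β} {f : α → β}
    (hf : BijOn f X Y) {R : α → β → Prop} (hR : ∀ a ∈ X, R a (f a))
    (huniq : ∀ f' : α → β, BijOn f' X Y → (∀ a ∈ X, R a (f' a)) → ∀ a ∈ X, f' a = f a)
    {S : Set α} (hSX : S ⊆ X) (hS : S.Finite) (hSne : S.Nonempty) :
    ∃ a ∈ S, ∀ a' ∈ S, R a (f a') → a' = a := by
  classical
  by_contra! hcycle
  choose! g hgS hgR hgne using hcycle
  set φ := S.piecewise g id with φ_def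
  have hXX : MapsTo φ X X := fun a ha => by
    by_cases haS : a ∈ S
    · simpa [φ_def, haS] using hSX (hgS a haS)
    · simpa [φ_def, haS] using ha
  have hXcXc : MapsTo φ Xᶜ Xᶜ := fun a ha => by
    simpa [φ_def, show a ∉ S from fun haS => ha (hSX haS)] using ha
  have hφR : ∀ a ∈ X, R a (f (φ a)) := fun a ha => by
    by_cases haS : a ∈ S <;> simp [φ_def, haS, hgR, hR a ha]
  have hSS : MapsTo φ S S := fun a ha => by simpa [φ_def, ha] using hgS a ha
  obtain ⟨c, hcS, hc⟩ := hS.exists_mem_periodicPts hSS hSne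
  -- `σ` turns the cycles of `φ` into an alternative matching
  set σ := (periodicPts φ).piecewise φ id with σ_def
  have hσ : BijOn σ X X := hXX.bijOn_piecewise_periodicPts hXcXc
  have hσR : ∀ a ∈ X, R a (f (σ a)) := fun a ha => by
    by_cases hap : a ∈ periodicPts φ <;> simp [σ_def, hap, hφR a ha, hR a ha]
  have hσc : σ c = c :=
    hf.injOn (hσ.mapsTo (hSX hcS)) (hSX hcS) (huniq (f ∘ σ) (hf.comp hσ) hσR c (hSX hcS))
  rw [σ_def, piecewise_eq_of_mem _ _ _ hc, φ_def, piecewise_eq_of_mem _ _ _ hcS] at hσc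
  exact hgne c hcS hσc

namespace Matroid

variable {α : Type*} {M : Matroid α}

theorem Indep.indep_of_unique_exchange_matching [DecidableEq α] {A B : Finset α}
    (hA : M.Indep ↑A) {f : α → α} (hf : BijOn f ↑(A \ B) ↑(B \ A))
    (hedge : ∀ g ∈ A \ B, M.Indep (insert (f g) ↑(A.erase g)))
    (huniq : ∀ f' : α → α, BijOn f' ↑(A \ B) ↑(B \ A) →
      (∀ g ∈ A \ B, M.Indep (insert (f' g) ↑(A.erase g))) → ∀ g ∈ A \ B, f' g = f g) :
    M.Indep ↑B := by
  have hmatched : ∀ b ∈ B, b ∉ A → ∃ g ∈ A \ B, f g = b := fun b hb hbA =>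
    hf.surjOn (by simp [hb, hbA] : b ∈ (↑(B \ A) : Set α))
  have hBE : (↑B : Set α) ⊆ M.E := fun b hb => by
    by_cases hbA : b ∈ A
    · exact hA.subset_ground hbA
    obtain ⟨g, hg, rfl⟩ := hmatched b hb hbA
    exact (hedge g hg).subset_ground (mem_insert _ _)
  by_contra hBdep
  obtain ⟨C, hCB, hC⟩ := ((not_indep_iff hBE).1 hBdep).exists_isCircuit_subset
  obtain ⟨b₀, hb₀C, hb₀A⟩ := not_subset.1 fun hCA => hC.dep.not_indep (hA.subset hCA)
  obtain ⟨a₀, ha₀, rfl⟩ := hmatched b₀ (hCB hb₀C) hb₀A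
  obtain ⟨a, ⟨ha, haC⟩, hsink⟩ := hf.exists_sink_of_unique
    (R := fun g b => M.Indep (insert b ↑(A.erase g))) (S := ↑(A \ B) ∩ f ⁻¹' C) hedge huniq
    inter_subset_left ((A \ B).finite_toSet.subset inter_subset_left) ⟨a₀, ha₀, hb₀C⟩
  have haB : a ∉ B := (Finset.mem_sdiff.1 ha).2
  have hIa : M.Indep ↑(A.erase a) := hA.subset (by simp)
  have hfaA : f a ∉ (↑(A.erase a) : Set α) := fun hfa =>
    (Finset.mem_sdiff.1 (hf.mapsTo ha)).2 (Finset.mem_of_mem_erase hfa)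
  have hC_cl : C \ {f a} ⊆ M.closure ↑(A.erase a) := by
    rintro x ⟨hxC, hxa⟩
    by_cases hxA : x ∈ A
    · refine M.subset_closure _ hIa.subset_ground ?_
      exact Finset.mem_erase.2 ⟨fun hxa => haB (hxa ▸ hCB hxC), hxA⟩
    obtain ⟨a', ha', rfl⟩ := hmatched x (hCB hxC) hxA
    exact hIa.mem_closure_iff'.2 ⟨hC.subset_ground hxC,
      fun hind => absurd (congrArg f (hsink a' ⟨ha', hxC⟩ hind)) hxa⟩
  have hfa_cl : f a ∈ M.closure ↑(A.erase a) :=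
    closure_subset_closure_of_subset_closure hC_cl (hC.mem_closure_sdiff_singleton_of_mem haC)
  exact ((hIa.insert_indep_iff_of_notMem hfaA).1 (hedge a ha)).2 hfa_cl

theorem Indep.insert_indep_of_subset_closure {A B : Set α} {s : α} (hB : M.Indep B)
    (hBA : B ⊆ M.closure A) (hsA : M.Indep (insert s A)) (hs : s ∉ A) :
    M.Indep (insert s B) := by
  obtain ⟨hsE, hs_cl⟩ := ((hsA.subset (subset_insert s A)).insert_indep_iff_of_notMem hs).1 hsA
  exact hB.insert_indep_iff.2
    (Or.inl ⟨hsE, fun hsB => hs_cl (closure_subset_closure_of_subset_closure hBA hsB)⟩)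

end Matroid

namespace FinMatroid

variable {E : Type*} [Fintype E] [DecidableEq E] (M : FinMatroid E)

noncomputable def toMatroid : Matroid E :=
  (IndepMatroid.ofFinset univ M.Indep M.empty_indep (fun _ _ hJ hIJ => M.subset_indep hJ hIJ)
    (fun _ _ hI hJ hIJ => by
      obtain ⟨g, hg, hgI⟩ := M.aug hI hJ hIJ
      exact ⟨g, (Finset.mem_sdiff.1 hg).1, (Finset.mem_sdiff.1 hg).2, hgI⟩)
    (fun _ _ => subset_univ _)).matroid

@[simp] theorem toMatroid_indep (I : Finset E) : M.toMatroid.Indep ↑I ↔ M.Indep I := by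
  simp [toMatroid]

theorem toMatroid_indep_insert (x : E) (I : Finset E) :
    M.toMatroid.Indep (insert x ↑I) ↔ M.Indep (insert x I) := by
  rw [← Finset.coe_insert, toMatroid_indep]

theorem card_le_rank {I S : Finset E} (hIS : I ⊆ S) (hI : M.Indep I) : I.card ≤ M.rank S :=
  le_csSup ⟨S.card, fun _ ⟨_, hJS, _, hJ⟩ => hJ ▸ Finset.card_le_card hJS⟩ ⟨I, hIS, hI, rfl⟩

theorem coe_subset_closure_of_rank_union_eq {A B : Finset E} (hA : M.Indep A)
    (hrank : M.rank (A ∪ B) = A.card) : (↑B : Set E) ⊆ M.toMatroid.closure ↑A := by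
  intro b hb
  refine ((M.toMatroid_indep A).2 hA).mem_closure_iff'.2 ⟨mem_univ b, fun hbA => ?_⟩
  by_contra hb'
  rw [← Finset.coe_insert, toMatroid_indep] at hbA
  have := M.card_le_rank (Finset.insert_subset (Finset.mem_union_right _ hb)
    Finset.subset_union_left) hbA
  rw [Finset.card_insert_of_notMem hb', hrank] at this
  omega

end FinMatroid

theorem stmt2_general {E : Type*} [Fintype E] [DecidableEq E] (M : FinMatroid E)
    (A B : Finset E) (hA : M.Indep A)
    (hrank : M.rank (A ∪ B) = A.card)
    (f : E → E)
    (hbij : Set.BijOn f ((A \ B : Finset E) : Set E) ((B \ A : Finset E) : Set E))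
    (hedge : ∀ g ∈ A \ B, M.Indep (insert (f g) (A.erase g)))
    (huniq : ∀ f' : E → E,
      Set.BijOn f' ((A \ B : Finset E) : Set E) ((B \ A : Finset E) : Set E) →
      (∀ g ∈ A \ B, M.Indep (insert (f' g) (A.erase g))) →
      ∀ g ∈ A \ B, f' g = f g)
    (s : E) (hs : s ∉ A ∪ B) (hAs : M.Indep (insert s A)) :
    M.Indep (insert s B) := by
  have hB : M.toMatroid.Indep ↑B :=
    ((M.toMatroid_indep A).2 hA).indep_of_unique_exchange_matching hbij
      (fun g hg => (M.toMatroid_indep_insert _ _).2 (hedge g hg))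
      (fun f' hf' hedge' => huniq f' hf' fun g hg => (M.toMatroid_indep_insert _ _).1 (hedge' g hg))
  have hsB := hB.insert_indep_of_subset_closure (M.coe_subset_closure_of_rank_union_eq hA hrank)
    ((M.toMatroid_indep_insert s A).2 hAs) (fun hsA => hs (Finset.mem_union_left B hsA))
  exact (M.toMatroid_indep_insert s B).1 hsB

/-- Under the unique-perfect-matching hypothesis and rank of the union equal to the
cardinality of `A`, adding an element `s` outside `A ∪ B` that keeps `A` independent
also keeps `B` independent. -/
theorem stmt2 {E : Type*} [Fintype E] [DecidableEq E] (M : FinMatroid E)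
    (A B : Finset E) (hA : M.Indep A) (hcard : B.card = A.card)
    (hrank : M.rank (A ∪ B) = A.card)
    (f : E → E)
    (hbij : Set.BijOn f ((A \ B : Finset E) : Set E) ((B \ A : Finset E) : Set E))
    (hedge : ∀ g ∈ A \ B, M.Indep (insert (f g) (A.erase g)))
    (huniq : ∀ f' : E → E,
      Set.BijOn f' ((A \ B : Finset E) : Set E) ((B \ A : Finset E) : Set E) →
      (∀ g ∈ A \ B, M.Indep (insert (f' g) (A.erase g))) →
      ∀ g ∈ A \ B, f' g = f g)
    (s : E) (hs : s ∉ A ∪ B) (hAs : M.Indep (insert s A)) :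
    M.Indep (insert s B) :=
  stmt2_general M A B hA hrank f hbij hedge huniq s hs hAs
end

section
/- Given matroids M_1, …, M_n on a common finite ground set E, the family of sets of the form I_1 ∪ … ∪ I_n with each I_i independent in M_i forms the independent sets of a matroid (the matroid union). -/
/-!
An independent set of the union is a set admitting a partition into parts `A i` independent in
`M i`. For augmentation, fix such a partition `B` of the larger set `J`, and among the partitions
`A` of `I` choose one maximising the overlap `∑ i, |A i ∩ B i|`. Some part has `|A k| < |B k|`,
so `M k` augments `A k` by some `g ∈ B k`. Were `g` already in `I`, moving it from its part into
`A k` would give a partition of `I` with larger overlap; hence `g ∉ I` and `insert g I` is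
independent in the union.
-/

open Finset Function

namespace FinMatroid

section moveTo

variable {E ι : Type*} [DecidableEq E] [DecidableEq ι]

def moveTo (A : ι → Finset E) (k : ι) (g : E) : ι → Finset E :=
  fun i ↦ if i = k then insert g (A i) else (A i).erase g

theorem mem_moveTo_of_ne {A : ι → Finset E} {k i : ι} {g x : E} (hx : x ≠ g) :
    x ∈ moveTo A k g i ↔ x ∈ A i := by
  unfold moveTo
  split_ifs <;> simp [hx]

theorem mem_moveTo_self {A : ι → Finset E} {k i : ι} {g : E} : g ∈ moveTo A k g i ↔ i = k := by
  unfold moveTo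
  split_ifs with hi <;> simp [hi]

theorem biUnion_moveTo [Fintype ι] (A : ι → Finset E) (k : ι) (g : E) :
    univ.biUnion (moveTo A k g) = insert g (univ.biUnion A) := by
  ext x
  by_cases hx : x = g
  · subst hx
    simp [mem_moveTo_self]
  · simp [mem_moveTo_of_ne hx, hx]

theorem pairwise_disjoint_moveTo {A : ι → Finset E} (hA : Pairwise (Disjoint on A))
    (k : ι) (g : E) : Pairwise (Disjoint on moveTo A k g) := by
  intro i j hij
  rw [onFun, disjoint_left]
  intro x hxi hxj
  by_cases hx : x = g
  · subst hx
    exact hij ((mem_moveTo_self.1 hxi).trans (mem_moveTo_self.1 hxj).symm)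
  · exact disjoint_left.1 (hA hij) ((mem_moveTo_of_ne hx).1 hxi) ((mem_moveTo_of_ne hx).1 hxj)

def overlap [Fintype ι] (A B : ι → Finset E) : ℕ :=
  ∑ i, (A i ∩ B i).card

theorem overlap_lt_overlap_moveTo [Fintype ι] {A B : ι → Finset E} {k : ι} {g : E}
    (hgA : g ∉ A k) (hgB : g ∈ B k) (hB : Pairwise (Disjoint on B)) :
    overlap A B < overlap (moveTo A k g) B := by
  have hk : (A k ∩ B k).card < (moveTo A k g k ∩ B k).card := by
    rw [moveTo, if_pos rfl, insert_inter_of_mem hgB, card_insert_of_notMem (by simp [hgA])]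
    exact Nat.lt_succ_self _
  have hne : ∀ i ≠ k, moveTo A k g i ∩ B i = A i ∩ B i := by
    intro i hi
    have hgBi : g ∉ B i := disjoint_left.1 (hB hi.symm) hgB
    rw [moveTo, if_neg hi, erase_inter, erase_eq_of_notMem (by simp [hgBi])]
  refine sum_lt_sum (fun i _ ↦ ?_) ⟨k, mem_univ _, hk⟩
  by_cases hi : i = k
  · exact hi ▸ hk.le
  · exact (congrArg card (hne i hi)).ge

end moveTo

variable {E ι : Type*} [Fintype E] [DecidableEq E] [Fintype ι]

def UnionIndep (M : ι → FinMatroid E) (S : Finset E) : Prop :=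
  ∃ I : ι → Finset E, (∀ i, (M i).Indep (I i)) ∧ S = univ.biUnion I

structure IsIndepPartition (M : ι → FinMatroid E) (A : ι → Finset E) (S : Finset E) : Prop where
  indep : ∀ i, (M i).Indep (A i)
  pairwise_disjoint : Pairwise (Disjoint on A)
  biUnion_eq : univ.biUnion A = S

variable {M : ι → FinMatroid E} {A B : ι → Finset E} {S : Finset E}

theorem unionIndep_empty : UnionIndep M ∅ :=
  ⟨fun _ ↦ ∅, fun i ↦ (M i).empty_indep, by ext; simp⟩

theorem UnionIndep.subset {S T : Finset E} (hS : UnionIndep M S) (hTS : T ⊆ S) :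
    UnionIndep M T := by
  obtain ⟨A, hA, rfl⟩ := hS
  refine ⟨fun i ↦ A i ∩ T, fun i ↦ (M i).subset_indep (hA i) inter_subset_left, ?_⟩
  rw [← biUnion_inter, inter_eq_right.2 hTS]

theorem IsIndepPartition.unionIndep (hA : IsIndepPartition M A S) : UnionIndep M S :=
  ⟨A, hA.indep, hA.biUnion_eq.symm⟩

theorem UnionIndep.exists_isIndepPartition (hS : UnionIndep M S) :
    ∃ A, IsIndepPartition M A S := by
  obtain ⟨I, hI, rfl⟩ := hS
  obtain ⟨A, hAI, hsup, hdisj⟩ := Fintype.exists_disjointed_le I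
  exact ⟨A, ⟨fun i ↦ (M i).subset_indep (hI i) (hAI i), hdisj,
    by rwa [← sup_eq_biUnion, ← sup_eq_biUnion]⟩⟩

theorem IsIndepPartition.sum_card (hA : IsIndepPartition M A S) :
    ∑ i, (A i).card = S.card := by
  rw [← hA.biUnion_eq, card_biUnion fun i _ j _ hij ↦ hA.pairwise_disjoint hij]

theorem IsIndepPartition.moveTo [DecidableEq ι] {k : ι} {g : E} (hA : IsIndepPartition M A S)
    (hk : (M k).Indep (insert g (A k))) : IsIndepPartition M (moveTo A k g) (insert g S) := by
  refine ⟨fun i ↦ ?_, pairwise_disjoint_moveTo hA.pairwise_disjoint k g, ?_⟩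
  · unfold FinMatroid.moveTo
    split_ifs with hi
    · exact hi ▸ hk
    · exact (M i).subset_indep (hA.indep i) (erase_subset _ _)
  · rw [biUnion_moveTo, hA.biUnion_eq]

theorem exists_isIndepPartition_forall_overlap_le (hS : UnionIndep M S) (B : ι → Finset E) :
    ∃ A, IsIndepPartition M A S ∧ ∀ A', IsIndepPartition M A' S → overlap A' B ≤ overlap A B := by
  classical
  obtain ⟨A₀, hA₀⟩ := hS.exists_isIndepPartition
  obtain ⟨A, hA, hmax⟩ := exists_max_image (univ.filter (IsIndepPartition M · S))
    (overlap · B) ⟨A₀, mem_filter.2 ⟨mem_univ _, hA₀⟩⟩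
  exact ⟨A, (mem_filter.1 hA).2, fun A' hA' ↦ hmax A' (mem_filter.2 ⟨mem_univ _, hA'⟩)⟩

theorem UnionIndep.exists_insert {I J : Finset E} (hI : UnionIndep M I) (hJ : UnionIndep M J)
    (hIJ : I.card < J.card) : ∃ g ∈ J \ I, UnionIndep M (insert g I) := by
  classical
  obtain ⟨B, hB⟩ := hJ.exists_isIndepPartition
  obtain ⟨A, hA, hmax⟩ := exists_isIndepPartition_forall_overlap_le hI B
  obtain ⟨k, -, hk⟩ : ∃ k ∈ univ, (A k).card < (B k).card :=
    exists_lt_of_sum_lt (by rwa [hA.sum_card, hB.sum_card])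
  obtain ⟨g, hg, hgk⟩ := (M k).aug (hA.indep k) (hB.indep k) hk
  obtain ⟨hgB, hgA⟩ := mem_sdiff.1 hg
  have hgJ : g ∈ J := hB.biUnion_eq ▸ mem_biUnion.2 ⟨k, mem_univ _, hgB⟩
  have hmove := hA.moveTo hgk
  have hgI : g ∉ I := fun hgI ↦ (hmax _ (insert_eq_of_mem hgI ▸ hmove)).not_gt
    (overlap_lt_overlap_moveTo hgA hgB hB.pairwise_disjoint)
  exact ⟨g, mem_sdiff.2 ⟨hgJ, hgI⟩, hmove.unionIndep⟩

def union (M : ι → FinMatroid E) : FinMatroid E where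
  Indep := UnionIndep M
  empty_indep := unionIndep_empty
  subset_indep _ _ hI hJI := hI.subset hJI
  aug _ _ hI hJ hIJ := hI.exists_insert hJ hIJ

end FinMatroid

/-- Matroid union: the unions of independent sets of matroids on a common ground set
form the independent sets of a matroid. -/
theorem stmt3 {E : Type*} [Fintype E] [DecidableEq E] {n : ℕ}
    (M : Fin n → FinMatroid E) :
    ∃ Mu : FinMatroid E, ∀ S : Finset E,
      Mu.Indep S ↔ ∃ I : Fin n → Finset E,
        (∀ i, (M i).Indep (I i)) ∧ S = Finset.univ.biUnion I :=
  ⟨FinMatroid.union M, fun _ ↦ Iff.rfl⟩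
end

section
/- Under monotone submodular valuations, every (partial) allocation satisfying the pairwise maximin share guarantee is envy-free up to one good (EF1). -/
/-- Maximin share `μ(k, S)` for a real-valued valuation. -/
noncomputable def mmsR {E : Type*} [Fintype E] [DecidableEq E]
    (v : Finset E → ℝ) (k : ℕ) (S : Finset E) : ℝ :=
  sSup {t | ∃ Y : Fin k → Finset E,
    (∀ a b, a ≠ b → Disjoint (Y a) (Y b)) ∧ Finset.univ.biUnion Y = S ∧
    ∀ j, t ≤ v (Y j)}

/-!
Fix agents `i ≠ j` and look at the marginal values `v_i(g | P_i)` of the goods `g ∈ P_j`.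
If one of them is positive, the 2-partition `(P_j \ {g}, P_i ∪ {g})` of `P_i ∪ P_j` has its
second part worth more than `P_i`, so PMMS forces `v_i(P_j \ {g}) ≤ v_i(P_i)`.
If all of them vanish, submodularity shows that adding all of `P_j` to `P_i` gains nothing,
so by monotonicity `v_i(P_j \ {g}) ≤ v_i(P_i ∪ P_j) ≤ v_i(P_i)` for every `g`.
-/

section MaximinShare

variable {E : Type*} [Fintype E] [DecidableEq E] {v : Finset E → ℝ}

/-- For `k = 0` the set in `mmsR` can be all of `ℝ`, whose `sSup` is the junk value `0`. -/
theorem le_mmsR (hv : Monotone v) {k : ℕ} [NeZero k] {S : Finset E} (Y : Fin k → Finset E)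
    (hdisj : ∀ a b, a ≠ b → Disjoint (Y a) (Y b)) (hunion : Finset.univ.biUnion Y = S)
    {t : ℝ} (ht : ∀ j, t ≤ v (Y j)) : t ≤ mmsR v k S :=
  le_csSup ⟨v Finset.univ, fun _ ⟨_, _, _, hY⟩ => (hY 0).trans (hv (Finset.subset_univ _))⟩
    ⟨Y, hdisj, hunion, ht⟩

theorem min_le_mmsR_two (hv : Monotone v) {A B : Finset E} (hAB : Disjoint A B) :
    min (v A) (v B) ≤ mmsR v 2 (A ∪ B) := by
  refine le_mmsR hv ![A, B] ?_ ?_ (Fin.forall_fin_two.2 ⟨min_le_left _ _, min_le_right _ _⟩)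
  · intro a b hab
    fin_cases a <;> fin_cases b <;> simp_all [hAB.symm]
  · ext x
    simp [Fin.exists_fin_two]

end MaximinShare

theorem union_le_of_forall_insert_le {E : Type*} [DecidableEq E] {v : Finset E → ℝ}
    (hsub : ∀ S T, v (S ∪ T) + v (S ∩ T) ≤ v S + v T) {S T : Finset E}
    (hT : ∀ g ∈ T, v (insert g S) ≤ v S) : v (S ∪ T) ≤ v S := by
  induction T using Finset.induction_on with
  | empty => simp
  | @insert g T hgT ih =>
    have hunion : (S ∪ T) ∪ insert g S = S ∪ insert g T := by
      ext x; simp only [Finset.mem_union, Finset.mem_insert]; tauto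
    have hinter : (S ∪ T) ∩ insert g S = S := by
      ext x; simp only [Finset.mem_inter, Finset.mem_union, Finset.mem_insert]
      constructor
      · rintro ⟨hxS | hxT, rfl | hxS'⟩ <;> first | assumption | exact absurd hxT hgT
      · exact fun hx => ⟨Or.inl hx, Or.inr hx⟩
    have h := hsub (S ∪ T) (insert g S)
    rw [hunion, hinter] at h
    have hg := hT g (Finset.mem_insert_self g T)
    have hrest := ih fun x hx => hT x (Finset.mem_insert_of_mem hx)
    linarith

theorem stmt6_general {n m : ℕ} (v : Fin n → Finset (Fin m) → ℝ)
    (hmono : ∀ i ⦃S T : Finset (Fin m)⦄, S ⊆ T → v i S ≤ v i T)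
    (hsub : ∀ i (S T : Finset (Fin m)), v i (S ∪ T) + v i (S ∩ T) ≤ v i S + v i T)
    (P : Fin n → Finset (Fin m))
    (hdisj : ∀ a b, a ≠ b → Disjoint (P a) (P b))
    (hpmms : ∀ i j, mmsR (v i) 2 (P i ∪ P j) ≤ v i (P i)) :
    ∀ i j, (P j).Nonempty → ∃ g ∈ P j, v i ((P j).erase g) ≤ v i (P i) := by
  intro i j ⟨g₀, hg₀⟩
  by_cases hgain : ∃ g ∈ P j, v i (P i) < v i (insert g (P i))
  · obtain ⟨g, hg, hlt⟩ := hgain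
    have hgi : g ∉ P i := fun h => hlt.ne (by rw [Finset.insert_eq_of_mem h])
    have hji : j ≠ i := by rintro rfl; exact hgi hg
    have hAB : Disjoint ((P j).erase g) (insert g (P i)) :=
      Finset.disjoint_insert_right.2
        ⟨Finset.notMem_erase g _, (hdisj j i hji).mono_left (Finset.erase_subset g _)⟩
    have hpart : (P j).erase g ∪ insert g (P i) = P i ∪ P j := by
      rw [Finset.union_insert, ← Finset.insert_union, Finset.insert_erase hg, Finset.union_comm]
    have hmin := (min_le_mmsR_two (hmono i) hAB).trans (hpart ▸ hpmms i j)
    exact ⟨g, hg, (min_le_iff.mp hmin).resolve_right hlt.not_ge⟩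
  · push Not at hgain
    refine ⟨g₀, hg₀, ?_⟩
    calc v i ((P j).erase g₀) ≤ v i (P i ∪ P j) :=
          hmono i ((Finset.erase_subset g₀ _).trans Finset.subset_union_right)
      _ ≤ v i (P i) := union_le_of_forall_insert_le (hsub i) hgain

/-- Under monotone submodular valuations, every (partial) allocation satisfying the
pairwise maximin share guarantee is EF1. -/
theorem stmt6 {n m : ℕ} (v : Fin n → Finset (Fin m) → ℝ)
    (hnn : ∀ i S, 0 ≤ v i S) (h0 : ∀ i, v i ∅ = 0)
    (hmono : ∀ i ⦃S T : Finset (Fin m)⦄, S ⊆ T → v i S ≤ v i T)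
    (hsub : ∀ i (S T : Finset (Fin m)), v i (S ∪ T) + v i (S ∩ T) ≤ v i S + v i T)
    (P : Fin n → Finset (Fin m))
    (hdisj : ∀ a b, a ≠ b → Disjoint (P a) (P b))
    (hpmms : ∀ i j, mmsR (v i) 2 (P i ∪ P j) ≤ v i (P i)) :
    ∀ i j, (P j).Nonempty → ∃ g ∈ P j, v i ((P j).erase g) ≤ v i (P i) :=
  stmt6_general v hmono hsub P hdisj hpmms
end

section
/- If agents have matroid-rank valuations and (A_1,…,A_n) is a partial allocation with each A_i independent in M_i that maximizes social welfare, and for some agents i, j we have v_i(A_i) < μ_i(2, A_i ∪ A_j), then |A_i| + 2 ≤ |A_j|. -/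
namespace FinMatroid

variable {E : Type*} [Fintype E] [DecidableEq E] (M : FinMatroid E)

lemma card_mem_upperBounds_indep_card (S : Finset E) :
    S.card ∈ upperBounds {t | ∃ I : Finset E, I ⊆ S ∧ M.Indep I ∧ I.card = t} := by
  rintro t ⟨I, hIS, -, rfl⟩
  exact Finset.card_le_card hIS

lemma rank_le_card (S : Finset E) : M.rank S ≤ S.card :=
  csSup_le' (M.card_mem_upperBounds_indep_card S)

lemma rank_eq_card_of_indep {S : Finset E} (h : M.Indep S) : M.rank S = S.card :=
  le_antisymm (M.rank_le_card S)
    (le_csSup ⟨_, M.card_mem_upperBounds_indep_card S⟩ ⟨S, subset_rfl, h, rfl⟩)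

end FinMatroid

lemma Finset.card_biUnion_fin_two {E : Type*} [DecidableEq E] (Y : Fin 2 → Finset E)
    (h : Disjoint (Y 0) (Y 1)) :
    (Finset.univ.biUnion Y).card = (Y 0).card + (Y 1).card := by
  have hunion : Finset.univ.biUnion Y = Y 0 ∪ Y 1 := by
    ext x
    simp [Fin.exists_fin_two]
  rw [hunion, Finset.card_union_of_disjoint h]

section MaximinShare

variable {E : Type*} [Fintype E] [DecidableEq E]

-- No boundedness hypothesis is needed: `sSup` of an unbounded set of naturals is `0`.
lemma exists_partition_of_lt_mmsN {v : Finset E → ℕ} {k : ℕ} {S : Finset E} {t : ℕ}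
    (h : t < mmsN v k S) :
    ∃ Y : Fin k → Finset E, (∀ a b, a ≠ b → Disjoint (Y a) (Y b)) ∧
      Finset.univ.biUnion Y = S ∧ ∀ j, t < v (Y j) := by
  obtain ⟨s, ⟨Y, hdisj, hunion, hle⟩, hts⟩ := exists_lt_of_lt_csSup' h
  exact ⟨Y, hdisj, hunion, fun j => hts.trans_le (hle j)⟩

lemma two_mul_succ_le_card_of_lt_mmsN_two {v : Finset E → ℕ} (hv : ∀ S, v S ≤ S.card)
    {S : Finset E} {t : ℕ} (h : t < mmsN v 2 S) : 2 * (t + 1) ≤ S.card := by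
  obtain ⟨Y, hdisj, rfl, hlt⟩ := exists_partition_of_lt_mmsN h
  have h0 := (hlt 0).trans_le (hv (Y 0))
  have h1 := (hlt 1).trans_le (hv (Y 1))
  rw [Finset.card_biUnion_fin_two Y (hdisj 0 1 (by decide))]
  omega

end MaximinShare

theorem stmt10_general {n m : ℕ} (Ms : Fin n → FinMatroid (Fin m))
    (A : Fin n → Finset (Fin m))
    (hind : ∀ k, (Ms k).Indep (A k))
    (i j : Fin n)
    (hfail : (Ms i).rank (A i) < mmsN (Ms i).rank 2 (A i ∪ A j)) :
    (A i).card + 2 ≤ (A j).card := by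
  rw [(Ms i).rank_eq_card_of_indep (hind i)] at hfail
  have hsplit := two_mul_succ_le_card_of_lt_mmsN_two (Ms i).rank_le_card hfail
  have hunion := Finset.card_union_le (A i) (A j)
  omega

/-- In a welfare-maximizing partial allocation with independent bundles, if agent `i`
fails the PMMS criterion against agent `j`, then `|A i| + 2 ≤ |A j|`. -/
theorem stmt10 {n m : ℕ} (Ms : Fin n → FinMatroid (Fin m))
    (A : Fin n → Finset (Fin m))
    (hdisj : ∀ a b, a ≠ b → Disjoint (A a) (A b))
    (hind : ∀ k, (Ms k).Indep (A k))
    (hswmax : ∀ B : Fin n → Finset (Fin m),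
      (∀ a b, a ≠ b → Disjoint (B a) (B b)) → Finset.univ.biUnion B = Finset.univ →
      ∑ k, (Ms k).rank (B k) ≤ ∑ k, (Ms k).rank (A k))
    (i j : Fin n)
    (hfail : (Ms i).rank (A i) < mmsN (Ms i).rank 2 (A i ∪ A j)) :
    (A i).card + 2 ≤ (A j).card :=
  stmt10_general Ms A hind i j hfail
end

section
/- Under binary additive valuations, an allocation is EF1 if and only if it is PMMS. -/
/-!
For a 0/1 valuation the goods of value one can be split evenly, so the maximin share of a
bundle `S` for two agents is exactly `⌊v(S)/2⌋`. Hence, for disjoint bundles `A` and `B`, PMMS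
reads `⌊(v(A) + v(B))/2⌋ ≤ v(A)`, i.e. `v(B) ≤ v(A) + 1`; and since each good is worth at most
one, this is also exactly what EF1 says.
-/

open Finset

variable {E : Type*}

lemma biUnion_univ_fin_two [DecidableEq E] (Y : Fin 2 → Finset E) :
    univ.biUnion Y = Y 0 ∪ Y 1 := by
  ext x
  simp [Fin.exists_fin_two]

lemma le_half_of_two_partition [DecidableEq E] (w : E → ℕ) {S : Finset E} {Y : Fin 2 → Finset E}
    (hdisj : ∀ a b, a ≠ b → Disjoint (Y a) (Y b)) (hcover : univ.biUnion Y = S) {t : ℕ}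
    (ht : ∀ j, t ≤ ∑ x ∈ Y j, w x) : t ≤ (∑ x ∈ S, w x) / 2 := by
  rw [← hcover, biUnion_univ_fin_two, sum_union (hdisj 0 1 (by decide))]
  have := ht 0
  have := ht 1
  omega

lemma mmsN_two_le_half [Fintype E] [DecidableEq E] (w : E → ℕ) (S : Finset E) :
    mmsN (fun T => ∑ x ∈ T, w x) 2 S ≤ (∑ x ∈ S, w x) / 2 :=
  csSup_le' fun _ ⟨_, hdisj, hcover, ht⟩ => le_half_of_two_partition w hdisj hcover ht

lemma le_mmsN_two_union [Fintype E] [DecidableEq E] (w : E → ℕ) {P Q : Finset E}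
    (hPQ : Disjoint P Q) {t : ℕ} (hP : t ≤ ∑ x ∈ P, w x) (hQ : t ≤ ∑ x ∈ Q, w x) :
    t ≤ mmsN (fun T => ∑ x ∈ T, w x) 2 (P ∪ Q) := by
  refine le_csSup ⟨_, fun _ ⟨_, hdisj, hcover, ht⟩ => le_half_of_two_partition w hdisj hcover ht⟩
    ⟨![P, Q], ?_, biUnion_univ_fin_two _, ?_⟩
  · intro a b hab
    fin_cases a <;> fin_cases b
    exacts [absurd rfl hab, hPQ, hPQ.symm, absurd rfl hab]
  · intro j
    fin_cases j
    exacts [hP, hQ]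

lemma exists_subset_sum_eq_of_le_one {w : E → ℕ} (hw : ∀ g, w g ≤ 1) {S : Finset E} {k : ℕ}
    (hk : k ≤ ∑ x ∈ S, w x) : ∃ U ⊆ S, ∑ x ∈ U, w x = k := by
  have hones : ∀ x ∈ S.filter (w · ≠ 0), w x = 1 := fun x hx => by
    have := hw x
    have := (mem_filter.1 hx).2
    omega
  have hsum : ∑ x ∈ S, w x = #(S.filter (w · ≠ 0)) := by
    rw [← sum_filter_ne_zero, sum_const_nat hones, mul_one]
  obtain ⟨U, hU, rfl⟩ := exists_subset_card_eq (hsum ▸ hk)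
  refine ⟨U, hU.trans (filter_subset _ _), ?_⟩
  rw [sum_const_nat fun x hx => hones x (hU hx), mul_one]

lemma mmsN_two_eq_half [Fintype E] [DecidableEq E] {w : E → ℕ} (hw : ∀ g, w g ≤ 1)
    (S : Finset E) : mmsN (fun T => ∑ x ∈ T, w x) 2 S = (∑ x ∈ S, w x) / 2 := by
  refine (mmsN_two_le_half w S).antisymm ?_
  obtain ⟨U, hUS, hU⟩ := exists_subset_sum_eq_of_le_one hw (Nat.div_le_self (∑ x ∈ S, w x) 2)
  have hrest := sum_sdiff (f := w) hUS
  have := le_mmsN_two_union w sdiff_disjoint (by omega : _ ≤ ∑ x ∈ S \ U, w x) hU.ge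
  rwa [sdiff_union_of_subset hUS] at this

lemma exists_sum_erase_le_iff [DecidableEq E] {w : E → ℕ} (hw : ∀ g, w g ≤ 1)
    (B : Finset E) (a : ℕ) :
    (B.Nonempty → ∃ g ∈ B, ∑ x ∈ B.erase g, w x ≤ a) ↔ ∑ x ∈ B, w x ≤ a + 1 := by
  constructor
  · intro hEF1
    rcases B.eq_empty_or_nonempty with rfl | hne
    · simp
    · obtain ⟨g, hg, hle⟩ := hEF1 hne
      rw [← sum_erase_add B w hg]
      exact add_le_add hle (hw g)
  · rintro hB ⟨g₀, hg₀⟩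
    by_cases hzero : ∑ x ∈ B, w x = 0
    · exact ⟨g₀, hg₀, (sum_le_sum_of_subset (erase_subset g₀ B)).trans (by omega)⟩
    · obtain ⟨g, hg, hgne⟩ := exists_ne_zero_of_sum_ne_zero hzero
      have hg1 : w g = 1 := le_antisymm (hw g) (Nat.one_le_iff_ne_zero.2 hgne)
      have := sum_erase_add B w hg
      exact ⟨g, hg, by omega⟩

theorem stmt15_general {n m : ℕ} (w : Fin n → Fin m → ℕ) (hw : ∀ i g, w i g ≤ 1)
    (A : Fin n → Finset (Fin m))
    (hdisj : ∀ a b, a ≠ b → Disjoint (A a) (A b)) :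
    (∀ i j, (A j).Nonempty →
        ∃ g ∈ A j, ∑ x ∈ (A j).erase g, w i x ≤ ∑ x ∈ A i, w i x) ↔
    (∀ i j, mmsN (fun S => ∑ x ∈ S, w i x) 2 (A i ∪ A j) ≤ ∑ x ∈ A i, w i x) := by
  refine forall₂_congr fun i j => ?_
  rw [exists_sum_erase_le_iff (hw i), mmsN_two_eq_half (hw i)]
  rcases eq_or_ne i j with rfl | hij
  · rw [union_self]
    omega
  · rw [sum_union (hdisj i j hij)]
    omega

/-- Under binary additive valuations, an allocation is EF1 iff it is PMMS. -/
theorem stmt15 {n m : ℕ} (w : Fin n → Fin m → ℕ) (hw : ∀ i g, w i g ≤ 1)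
    (A : Fin n → Finset (Fin m))
    (hdisj : ∀ a b, a ≠ b → Disjoint (A a) (A b))
    (hcover : Finset.univ.biUnion A = Finset.univ) :
    (∀ i j, (A j).Nonempty →
        ∃ g ∈ A j, ∑ x ∈ (A j).erase g, w i x ≤ ∑ x ∈ A i, w i x) ↔
    (∀ i j, mmsN (fun S => ∑ x ∈ S, w i x) 2 (A i ∪ A j) ≤ ∑ x ∈ A i, w i x) :=
  stmt15_general w hw A hdisj
end

section
/- Under binary additive valuations, every EF1 allocation is an MMS allocation: each agent receives value at least her n-agent maximin share. -/
open Finset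

/-! With binary valuations, removing one good lowers a bundle's value by at most one, so under
EF1 every bundle is worth at most `v_i(A_i) + 1` to agent `i`, and hence all of `[m]` is worth
less than `n (v_i(A_i) + 1)` to her. A partition all of whose parts are worth at least `t`
has total value at least `n t`, so `μ_i < v_i(A_i) + 1`. -/

lemma sum_le_add_one_of_sum_erase_le {α : Type*} [DecidableEq α] {f : α → ℕ} {s : Finset α}
    {g : α} {c : ℕ} (hg : g ∈ s) (hfg : f g ≤ 1) (h : ∑ x ∈ s.erase g, f x ≤ c) :
    ∑ x ∈ s, f x ≤ c + 1 := by
  rw [← add_sum_erase s f hg]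
  omega

lemma card_mul_le_sum_biUnion {ι α : Type*} [Fintype ι] [DecidableEq α] (f : α → ℕ)
    {Y : ι → Finset α} (hdisj : ∀ a b, a ≠ b → Disjoint (Y a) (Y b)) {t : ℕ}
    (ht : ∀ j, t ≤ ∑ x ∈ Y j, f x) :
    Fintype.card ι * t ≤ ∑ x ∈ univ.biUnion Y, f x := by
  rw [sum_biUnion fun a _ b _ hab => hdisj a b hab, ← smul_eq_mul, ← card_univ,
    ← sum_const]
  exact sum_le_sum fun j _ => ht j

lemma mmsN_le_of_sum_lt {E : Type*} [Fintype E] [DecidableEq E] (f : E → ℕ) {k c : ℕ}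
    {S : Finset E} (h : ∑ x ∈ S, f x < k * (c + 1)) :
    mmsN (fun T => ∑ x ∈ T, f x) k S ≤ c := by
  refine csSup_le' ?_
  rintro t ⟨Y, hdisj, hcover, ht⟩
  have hkt := card_mul_le_sum_biUnion f hdisj ht
  rw [Fintype.card_fin, hcover] at hkt
  exact Nat.lt_add_one_iff.mp (Nat.lt_of_mul_lt_mul_left (hkt.trans_lt h))

/-- Under binary additive valuations, every EF1 allocation is an MMS allocation. -/
theorem stmt16 {n m : ℕ} (w : Fin n → Fin m → ℕ) (hw : ∀ i g, w i g ≤ 1)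
    (A : Fin n → Finset (Fin m))
    (hdisj : ∀ a b, a ≠ b → Disjoint (A a) (A b))
    (hcover : Finset.univ.biUnion A = Finset.univ)
    (hef1 : ∀ i j, (A j).Nonempty →
      ∃ g ∈ A j, ∑ x ∈ (A j).erase g, w i x ≤ ∑ x ∈ A i, w i x) :
    ∀ i, mmsN (fun S => ∑ x ∈ S, w i x) n Finset.univ ≤ ∑ x ∈ A i, w i x := by
  intro i
  have hbundle : ∀ j, ∑ x ∈ A j, w i x ≤ ∑ x ∈ A i, w i x + 1 := by
    intro j
    obtain hA | hA := (A j).eq_empty_or_nonempty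
    · simp [hA]
    · obtain ⟨g, hg, hle⟩ := hef1 i j hA
      exact sum_le_add_one_of_sum_erase_le hg (hw i g) hle
  apply mmsN_le_of_sum_lt
  calc ∑ x, w i x = ∑ j, ∑ x ∈ A j, w i x := by
        rw [← hcover, sum_biUnion fun a _ b _ hab => hdisj a b hab]
    _ < ∑ _j : Fin n, (∑ x ∈ A i, w i x + 1) :=
        sum_lt_sum (fun j _ => hbundle j) ⟨i, mem_univ i, lt_add_one _⟩
    _ = n * (∑ x ∈ A i, w i x + 1) := by simp
end

section
/- Let (A_1,…,A_n) with each A_i independent in matroid M_i be a tuple of disjoint sets, and let P = (g_1,…,g_t) be a shortest directed path in the exchange graph from F_i(A_i) to A_j (i ≠ j). Then augmenting along P yields A_k Δ P independent in M_k for all k ∉ {i, j}, (A_i Δ P) ∪ {g_1} independent in M_i, and A_j \ {g_t} independent in M_j. -/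
/-- The edge relation of the exchange graph: `(a, b)` is an edge iff for some agent `i`,
`a ∈ A i`, `b ∉ A i`, and swapping preserves independence. -/
def edgeRel {n m : ℕ} (Ms : Fin n → FinMatroid (Fin m))
    (A : Fin n → Finset (Fin m)) (a b : Fin m) : Prop :=
  ∃ i, a ∈ A i ∧ b ∉ A i ∧ (Ms i).Indep (insert b ((A i).erase a))

/-- The set of endpoints of edges of a path `P` that leave `Ak`. -/
def pathSwap {m : ℕ} (Ak : Finset (Fin m)) (P : List (Fin m)) : Finset (Fin m) :=
  ((P.zip P.tail).filter (fun p => decide (p.1 ∈ Ak))).foldr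
    (fun p s => insert p.1 (insert p.2 s)) ∅

/-!
On a shortest path no edge skips ahead and no vertex after `g₁` lies in `F_i(A_i)`: either
would give a shorter path. Hence, for every agent `k`, the edges `(x₁, y₁), …, (x_s, y_s)` of
`P` leaving `A_k` form a triangular system of exchanges: `A_k - x_l + y_l` is independent while
`A_k - x_l + y_{l'}` is dependent for `l < l'`. The triangular exchange lemma then shows that
performing all of them keeps `A_k` independent. For agent `i` the same lemma is applied to the
independent set `A_i + g₁`, which is legitimate because no `y_l` lies in `F_i(A_i)`.
-/

namespace FinMatroid

variable {E : Type*} [Fintype E] [DecidableEq E] (M : FinMatroid E)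

theorem exists_minimal_dep_subset {D : Finset E} (hD : ¬ M.Indep D) :
    ∃ C ⊆ D, ¬ M.Indep C ∧ ∀ z ∈ C, M.Indep (C.erase z) := by
  classical
  obtain ⟨C, hC, hmin⟩ := Finset.exists_min_image
    (D.powerset.filter (¬ M.Indep ·)) Finset.card ⟨D, by simp [hD]⟩
  simp only [Finset.mem_filter, Finset.mem_powerset] at hC hmin
  refine ⟨C, hC.1, hC.2, fun z hz => ?_⟩
  by_contra hdep
  have := hmin (C.erase z) ⟨(Finset.erase_subset _ _).trans hC.1, hdep⟩
  have := Finset.card_erase_lt_of_mem hz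
  omega

theorem exists_indep_superset_card_le {K I : Finset E} (hK : M.Indep K) (hI : M.Indep I) :
    ∃ J, K ⊆ J ∧ J ⊆ K ∪ I ∧ M.Indep J ∧ I.card ≤ J.card := by
  by_cases hlt : K.card < I.card
  · obtain ⟨g, hg, hgK⟩ := M.aug hK hI hlt
    obtain ⟨J, hKJ, hJ, hJind, hcard⟩ := exists_indep_superset_card_le hgK hI
    refine ⟨J, (Finset.subset_insert _ _).trans hKJ, hJ.trans ?_, hJind, hcard⟩
    exact Finset.union_subset (Finset.insert_subset (Finset.mem_union_right _
      (Finset.mem_sdiff.1 hg).1) Finset.subset_union_left) Finset.subset_union_right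
  · exact ⟨K, subset_rfl, Finset.subset_union_left, hK, by omega⟩
termination_by I.card - K.card
decreasing_by
  rw [Finset.card_insert_of_notMem (Finset.mem_sdiff.1 hg).2]
  omega

/-- `C` is the fundamental circuit of `y` with respect to `I`. -/
theorem indep_exchange_iff_mem {I C : Finset E} {y z : E} (hI : M.Indep I) (hy : y ∉ I)
    (hCI : C ⊆ insert y I) (hC : ¬ M.Indep C) (hCmin : ∀ x ∈ C, M.Indep (C.erase x))
    (hz : z ∈ I) : M.Indep (insert y (I.erase z)) ↔ z ∈ C := by
  have hzy : z ≠ y := fun h => hy (h ▸ hz)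
  have herase : insert y (I.erase z) = (insert y I).erase z := by
    rw [Finset.erase_insert_of_ne hzy.symm]
  constructor
  · intro hind
    by_contra hzC
    refine hC (M.subset_indep hind ?_)
    rw [herase]
    exact fun c hc => Finset.mem_erase.2 ⟨fun h => hzC (h ▸ hc), hCI hc⟩
  · intro hzC
    -- Extend `C - z` inside `I + y` to an independent set as large as `I`; it must omit `z`.
    obtain ⟨J, hCJ, hJ, hJind, hcard⟩ := M.exists_indep_superset_card_le (hCmin z hzC) hI
    have hzJ : z ∉ J := fun hzJ => hC (M.subset_indep hJind fun c hc =>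
      if h : c = z then h ▸ hzJ else hCJ (Finset.mem_erase.2 ⟨h, hc⟩))
    have hJsub : J ⊆ insert y (I.erase z) := by
      rw [herase]
      refine fun c hc => Finset.mem_erase.2 ⟨fun h => hzJ (h ▸ hc), ?_⟩
      rcases Finset.mem_union.1 (hJ hc) with h | h
      · exact hCI (Finset.mem_of_mem_erase h)
      · exact Finset.mem_insert_of_mem h
    have hcard' : (insert y (I.erase z)).card ≤ J.card := by
      rwa [Finset.card_insert_of_notMem fun h => hy (Finset.mem_of_mem_erase h),
        Finset.card_erase_add_one hz]
    rwa [← Finset.eq_of_subset_of_card_le hJsub hcard']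

/-- The fundamental circuit of `y` in `I` avoids `I \ J`, so it is also that of `y` in `J`. -/
theorem indep_exchange_iff_of_forall_sdiff {I J : Finset E} {y z : E} (hI : M.Indep I)
    (hJ : M.Indep J) (hyI : y ∉ I) (hyJ : y ∉ J) (hdep : ¬ M.Indep (insert y I))
    (hIJ : ∀ x ∈ I, x ∉ J → ¬ M.Indep (insert y (I.erase x))) (hzI : z ∈ I) (hzJ : z ∈ J) :
    M.Indep (insert y (J.erase z)) ↔ M.Indep (insert y (I.erase z)) := by
  obtain ⟨C, hCI, hC, hCmin⟩ := M.exists_minimal_dep_subset hdep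
  have hCJ : C ⊆ insert y J := by
    intro c hc
    rcases Finset.mem_insert.1 (hCI hc) with rfl | hcI
    · exact Finset.mem_insert_self _ _
    · by_contra hcJ
      exact hIJ c hcI (fun h => hcJ (Finset.mem_insert_of_mem h))
        ((M.indep_exchange_iff_mem hI hyI hCI hC hCmin hcI).2 hc)
  rw [M.indep_exchange_iff_mem hJ hyJ hCJ hC hCmin hzJ,
    M.indep_exchange_iff_mem hI hyI hCI hC hCmin hzI]

end FinMatroid

section SwapSet

variable {α : Type*} [DecidableEq α]

def swapSet (L : List (α × α)) : Finset α :=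
  L.foldr (fun p s => insert p.1 (insert p.2 s)) ∅

theorem mem_swapSet {L : List (α × α)} {x : α} :
    x ∈ swapSet L ↔ ∃ p ∈ L, x = p.1 ∨ x = p.2 := by
  induction L with
  | nil => simp [swapSet]
  | cons p L ih =>
    simp only [swapSet, List.foldr_cons, Finset.mem_insert] at ih ⊢
    rw [ih]
    simp only [List.mem_cons, exists_eq_or_imp, or_assoc]

theorem Finset.symmDiff_insert_insert {I S : Finset α} {a b : α} (ha : a ∈ I) (hb : b ∉ I)
    (haS : a ∉ S) (hbS : b ∉ S) :
    symmDiff I (insert a (insert b S)) = symmDiff (insert b (I.erase a)) S := by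
  ext x
  simp only [Finset.mem_symmDiff, Finset.mem_insert, Finset.mem_erase]
  grind

theorem Finset.insert_symmDiff_of_notMem {I S : Finset α} {y : α} (hy : y ∉ S) :
    insert y (symmDiff I S) = symmDiff (insert y I) S := by
  ext x
  simp only [Finset.mem_symmDiff, Finset.mem_insert]
  grind

end SwapSet

namespace FinMatroid

variable {E : Type*} [Fintype E] [DecidableEq E] (M : FinMatroid E)

/-- Triangular exchange: performing the exchanges in order, triangularity keeps the fundamental
circuit of each later pair away from the elements already removed, so that later pairs remain
exchange pairs. -/
theorem indep_symmDiff_swapSet : ∀ (L : List (E × E)) {I : Finset E}, M.Indep I →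
    (∀ p ∈ L, p.1 ∈ I ∧ p.2 ∉ I ∧ M.Indep (insert p.2 (I.erase p.1))) →
    L.Pairwise (fun u v => ¬ M.Indep (insert v.2 (I.erase u.1))) →
    M.Indep (symmDiff I (swapSet L))
  | [], I, hI, _, _ => by rwa [swapSet, List.foldr_nil, ← Finset.bot_eq_empty, symmDiff_bot]
  | p :: L, I, hI, hL, hpair => by
    obtain ⟨hp1, hp2, hpJ⟩ := hL p List.mem_cons_self
    have hq : ∀ q ∈ L, q.1 ∈ I ∧ q.2 ∉ I ∧ M.Indep (insert q.2 (I.erase q.1)) :=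
      fun q hq => hL q (List.mem_cons_of_mem _ hq)
    obtain ⟨hpq, hpair⟩ := List.pairwise_cons.1 hpair
    have hne : ∀ q ∈ L, q.1 ≠ p.1 ∧ q.2 ≠ p.2 := fun q hmem =>
      ⟨fun h => hpq q hmem (h ▸ (hq q hmem).2.2), fun h => hpq q hmem (h ▸ hpJ)⟩
    set J := insert p.2 (I.erase p.1)
    have hmemJ : ∀ q ∈ L, q.1 ∈ J ∧ q.2 ∉ J := by
      intro q hmem
      simp only [J, Finset.mem_insert, Finset.mem_erase, not_or, not_and]
      exact ⟨Or.inr ⟨(hne q hmem).1, (hq q hmem).1⟩, (hne q hmem).2, fun _ => (hq q hmem).2.1⟩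
    have htransfer : ∀ u ∈ L, ∀ v ∈ L,
        M.Indep (insert v.2 (J.erase u.1)) ↔ M.Indep (insert v.2 (I.erase u.1)) := by
      intro u hu v hv
      refine M.indep_exchange_iff_of_forall_sdiff hI hpJ (hq v hv).2.1 (hmemJ v hv).2
        (fun h => hpq v hv (M.subset_indep h
          (Finset.insert_subset_insert _ (Finset.erase_subset _ _))))
        (fun x hxI hxJ => ?_) (hq u hu).1 (hmemJ u hu).1
      obtain rfl : x = p.1 := by
        by_contra hx
        exact hxJ (Finset.mem_insert_of_mem (Finset.mem_erase.2 ⟨hx, hxI⟩))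
      exact hpq v hv
    have hJ := indep_symmDiff_swapSet L hpJ
      (fun q hmem => ⟨(hmemJ q hmem).1, (hmemJ q hmem).2,
        (htransfer q hmem q hmem).2 (hq q hmem).2.2⟩)
      (hpair.imp_of_mem fun hu hv h => by rwa [htransfer _ hu _ hv])
    have hp1S : p.1 ∉ swapSet L := by
      rw [mem_swapSet]
      rintro ⟨q, hmem, h | h⟩
      · exact (hne q hmem).1 h.symm
      · exact (hq q hmem).2.1 (h ▸ hp1)
    have hp2S : p.2 ∉ swapSet L := by
      rw [mem_swapSet]
      rintro ⟨q, hmem, h | h⟩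
      · exact hp2 (h ▸ (hq q hmem).1)
      · exact (hne q hmem).2 h.symm
    rwa [swapSet, List.foldr_cons, ← swapSet, Finset.symmDiff_insert_insert hp1 hp2 hp1S hp2S]

theorem indep_insert_symmDiff_swapSet (L : List (E × E)) {I : Finset E} {y : E}
    (hI : M.Indep I) (hyI : y ∉ I) (hyI' : M.Indep (insert y I))
    (hL : ∀ p ∈ L, p.1 ∈ I ∧ p.2 ∉ I ∧ M.Indep (insert p.2 (I.erase p.1)) ∧
      ¬ M.Indep (insert p.2 I))
    (hpair : L.Pairwise (fun u v => ¬ M.Indep (insert v.2 (I.erase u.1)))) :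
    M.Indep (insert y (symmDiff I (swapSet L))) := by
  have hne : ∀ p ∈ L, p.2 ≠ y := fun p hp h => (hL p hp).2.2.2 (h ▸ hyI')
  have hmemJ : ∀ p ∈ L, p.1 ∈ insert y I ∧ p.2 ∉ insert y I := fun p hp =>
    ⟨Finset.mem_insert_of_mem (hL p hp).1,
      by simp only [Finset.mem_insert, not_or]; exact ⟨hne p hp, (hL p hp).2.1⟩⟩
  have htransfer : ∀ u ∈ L, ∀ v ∈ L, M.Indep (insert v.2 ((insert y I).erase u.1)) ↔
      M.Indep (insert v.2 (I.erase u.1)) := fun u hu v hv =>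
    M.indep_exchange_iff_of_forall_sdiff hI hyI' (hL v hv).2.1 (hmemJ v hv).2 (hL v hv).2.2.2
      (fun _ hx hxJ => absurd (Finset.mem_insert_of_mem hx) hxJ) (hL u hu).1 (hmemJ u hu).1
  have hJ := M.indep_symmDiff_swapSet L hyI'
    (fun p hp => ⟨(hmemJ p hp).1, (hmemJ p hp).2, (htransfer p hp p hp).2 (hL p hp).2.2.1⟩)
    (hpair.imp_of_mem fun hu hv h => by rwa [htransfer _ hu _ hv])
  have hyS : y ∉ swapSet L := by
    rw [mem_swapSet]
    rintro ⟨p, hp, h | h⟩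
    · exact hyI (h ▸ (hL p hp).1)
    · exact hne p hp h.symm
  rwa [Finset.insert_symmDiff_of_notMem hyS]

end FinMatroid

section ShortestPath

variable {α : Type*} {R : α → α → Prop} {S T : α → Prop} {P : List α}

structure IsShortestPath (R : α → α → Prop) (S T : α → Prop) (P : List α) : Prop where
  ne_nil : P ≠ []
  isChain : P.IsChain R
  source_head : S (P.head ne_nil)
  target_getLast : T (P.getLast ne_nil)
  length_le : ∀ (Q : List α) (hQ : Q ≠ []), Q.IsChain R → S (Q.head hQ) → T (Q.getLast hQ) →
    P.length ≤ Q.length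

namespace IsShortestPath

theorem not_rel_getElem (h : IsShortestPath R S T P) {a c : ℕ} (hac : a + 2 ≤ c)
    (hc : c < P.length) : ¬ R P[a] P[c] := by
  intro hR
  set Q := P.take (a + 1) ++ P.drop c
  have htake : P.take (a + 1) ≠ [] := by simp [h.ne_nil]
  have hdrop : P.drop c ≠ [] := by simpa using hc
  have hQ : Q ≠ [] := by simp [Q, htake]
  have hchain : Q.IsChain R := by
    refine List.isChain_append.2 ⟨h.isChain.take _, h.isChain.drop _, fun x hx y hy => ?_⟩
    rw [List.getLast?_take, if_neg (by omega), Nat.add_sub_cancel,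
      List.getElem?_eq_getElem (by omega), Option.some_or, Option.mem_some_iff] at hx
    rw [List.head?_drop, List.getElem?_eq_getElem hc, Option.mem_some_iff] at hy
    exact hx ▸ hy ▸ hR
  have hhead : Q.head hQ = P.head h.ne_nil := by
    rw [List.head_append_of_ne_nil htake, List.head_take]
  have hlast : Q.getLast hQ = P.getLast h.ne_nil := by
    rw [List.getLast_append_of_ne_nil _ hdrop, List.getLast_drop]
  have := h.length_le Q hQ hchain (hhead ▸ h.source_head) (hlast ▸ h.target_getLast)
  simp only [Q, List.length_append, List.length_take, List.length_drop] at this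
  omega

theorem not_source_getElem (h : IsShortestPath R S T P) {r : ℕ} (hr0 : 0 < r)
    (hr : r < P.length) : ¬ S P[r] := by
  intro hS
  have hdrop : P.drop r ≠ [] := by simpa using hr
  have := h.length_le (P.drop r) hdrop (h.isChain.drop r) (by rwa [List.head_drop])
    (by rw [List.getLast_drop]; exact h.target_getLast)
  simp only [List.length_drop] at this
  omega

theorem pairwise_zip_tail (h : IsShortestPath R S T P) :
    (P.zip P.tail).Pairwise fun u v => ¬ R u.1 v.2 := by
  rw [List.pairwise_iff_getElem]
  intro a b ha hb hab
  simp only [List.length_zip, List.length_tail] at hb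
  simp only [List.getElem_zip, List.getElem_tail]
  exact h.not_rel_getElem (by omega) (by omega)

theorem not_source_of_mem_zip_tail (h : IsShortestPath R S T P) {p : α × α}
    (hp : p ∈ P.zip P.tail) : ¬ S p.2 := by
  obtain ⟨r, hr, rfl⟩ := List.mem_iff_getElem.1 hp
  simp only [List.length_zip, List.length_tail] at hr
  simp only [List.getElem_zip, List.getElem_tail]
  exact h.not_source_getElem (by omega) (by omega)

end IsShortestPath

theorem List.IsChain.rel_of_mem_zip_tail (hP : P.IsChain R) {p : α × α}
    (hp : p ∈ P.zip P.tail) : R p.1 p.2 := by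
  obtain ⟨r, hr, rfl⟩ := List.mem_iff_getElem.1 hp
  simp only [List.length_zip, List.length_tail] at hr
  simp only [List.getElem_zip, List.getElem_tail]
  exact List.isChain_iff_getElem.1 hP r (by omega)

end ShortestPath

section ExchangeGraph

def leavingPairs {α : Type*} [DecidableEq α] (Ak : Finset α) (P : List α) : List (α × α) :=
  (P.zip P.tail).filter fun p => p.1 ∈ Ak

theorem pathSwap_eq_swapSet {m : ℕ} (Ak : Finset (Fin m)) (P : List (Fin m)) :
    pathSwap Ak P = swapSet (leavingPairs Ak P) :=
  rfl

variable {n m : ℕ} {Ms : Fin n → FinMatroid (Fin m)} {A : Fin n → Finset (Fin m)}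

theorem indep_exchange_of_edgeRel (hdisj : ∀ a b, a ≠ b → Disjoint (A a) (A b)) {k : Fin n}
    {x y : Fin m} (hx : x ∈ A k) (h : edgeRel Ms A x y) :
    y ∉ A k ∧ (Ms k).Indep (insert y ((A k).erase x)) := by
  obtain ⟨k', hxk', hyk', hind⟩ := h
  obtain rfl : k' = k := by
    by_contra hne
    exact Finset.disjoint_left.1 (hdisj k' k hne) hxk' hx
  exact ⟨hyk', hind⟩

theorem exchange_of_mem_leavingPairs (hdisj : ∀ a b, a ≠ b → Disjoint (A a) (A b))
    {P : List (Fin m)} (hP : P.IsChain (edgeRel Ms A)) (k : Fin n) :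
    ∀ p ∈ leavingPairs (A k) P,
      p.1 ∈ A k ∧ p.2 ∉ A k ∧ (Ms k).Indep (insert p.2 ((A k).erase p.1)) := by
  intro p hp
  obtain ⟨hpP, hpk⟩ := List.mem_filter.1 hp
  have hpk : p.1 ∈ A k := of_decide_eq_true hpk
  exact ⟨hpk, indep_exchange_of_edgeRel hdisj hpk (hP.rel_of_mem_zip_tail hpP)⟩

theorem pairwise_leavingPairs (hdisj : ∀ a b, a ≠ b → Disjoint (A a) (A b))
    {S T : Fin m → Prop} {P : List (Fin m)} (hP : IsShortestPath (edgeRel Ms A) S T P)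
    (k : Fin n) : (leavingPairs (A k) P).Pairwise
      fun u v => ¬ (Ms k).Indep (insert v.2 ((A k).erase u.1)) :=
  (hP.pairwise_zip_tail.filter _).imp_of_mem fun hu hv hchord hind =>
    hchord ⟨k, (exchange_of_mem_leavingPairs hdisj hP.isChain k _ hu).1,
      (exchange_of_mem_leavingPairs hdisj hP.isChain k _ hv).2.1, hind⟩

end ExchangeGraph

theorem stmt17_general {n m : ℕ} (Ms : Fin n → FinMatroid (Fin m))
    (A : Fin n → Finset (Fin m))
    (hdisj : ∀ a b, a ≠ b → Disjoint (A a) (A b))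
    (hind : ∀ k, (Ms k).Indep (A k))
    (i j : Fin n)
    (P : List (Fin m)) (hP : P ≠ [])
    (hchain : P.Chain' (edgeRel Ms A))
    (hhead : P.head hP ∉ A i ∧ (Ms i).Indep (insert (P.head hP) (A i)))
    (hlast : P.getLast hP ∈ A j)
    (hshort : ∀ (Q : List (Fin m)) (hQ : Q ≠ []), Q.Chain' (edgeRel Ms A) →
      (Q.head hQ ∉ A i ∧ (Ms i).Indep (insert (Q.head hQ) (A i))) →
      Q.getLast hQ ∈ A j → P.length ≤ Q.length) :
    (∀ k, k ≠ i → k ≠ j → (Ms k).Indep (symmDiff (A k) (pathSwap (A k) P))) ∧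
    (Ms i).Indep (insert (P.head hP) (symmDiff (A i) (pathSwap (A i) P))) ∧
    (Ms j).Indep ((A j).erase (P.getLast hP)) := by
  have hshortest : IsShortestPath (edgeRel Ms A)
      (fun x => x ∉ A i ∧ (Ms i).Indep (insert x (A i))) (· ∈ A j) P :=
    ⟨hP, hchain, hhead, hlast, hshort⟩
  refine ⟨fun k _ _ => ?_, ?_, (Ms j).subset_indep (hind j) (Finset.erase_subset _ _)⟩
  · rw [pathSwap_eq_swapSet]
    exact (Ms k).indep_symmDiff_swapSet _ (hind k) (exchange_of_mem_leavingPairs hdisj hchain k)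
      (pairwise_leavingPairs hdisj hshortest k)
  · rw [pathSwap_eq_swapSet]
    refine (Ms i).indep_insert_symmDiff_swapSet _ (hind i) hhead.1 hhead.2 (fun p hp => ?_)
      (pairwise_leavingPairs hdisj hshortest i)
    obtain ⟨hp1, hp2, hpI⟩ := exchange_of_mem_leavingPairs hdisj hchain i p hp
    exact ⟨hp1, hp2, hpI, fun h =>
      hshortest.not_source_of_mem_zip_tail (List.mem_filter.1 hp).1 ⟨hp2, h⟩⟩

/-- Augmenting along a shortest path in the exchange graph from `F_i(A i)` to `A j`
keeps every bundle independent: `A k Δ P` for `k ∉ {i,j}`, `(A i Δ P) + g₁` for agent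
`i`, and `A j - g_t` for agent `j`. -/
theorem stmt17 {n m : ℕ} (Ms : Fin n → FinMatroid (Fin m))
    (A : Fin n → Finset (Fin m))
    (hdisj : ∀ a b, a ≠ b → Disjoint (A a) (A b))
    (hind : ∀ k, (Ms k).Indep (A k))
    (i j : Fin n) (hij : i ≠ j)
    (P : List (Fin m)) (hP : P ≠ [])
    (hchain : P.Chain' (edgeRel Ms A))
    (hhead : P.head hP ∉ A i ∧ (Ms i).Indep (insert (P.head hP) (A i)))
    (hlast : P.getLast hP ∈ A j)
    (hshort : ∀ (Q : List (Fin m)) (hQ : Q ≠ []), Q.Chain' (edgeRel Ms A) →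
      (Q.head hQ ∉ A i ∧ (Ms i).Indep (insert (Q.head hQ) (A i))) →
      Q.getLast hQ ∈ A j → P.length ≤ Q.length) :
    (∀ k, k ≠ i → k ≠ j → (Ms k).Indep (symmDiff (A k) (pathSwap (A k) P))) ∧
    (Ms i).Indep (insert (P.head hP) (symmDiff (A i) (pathSwap (A i) P))) ∧
    (Ms j).Indep ((A j).erase (P.getLast hP)) :=
  stmt17_general Ms A hdisj hind i j P hP hchain hhead hlast hshort
end
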